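/- arXiv:1209.2544 — 2 statements merged into one kernel-verified Lean document; each statement's English description precedes it below -/
import Mathlib

section
/- Let p_X, p_Y be probability densities on ℝ^d with p_X, p_Y ∈ L^{a+b+1}(ℝ^d) for nonnegative reals a, b. Define p_{X,ε}(x) = ∫_{B_ε(x)} p_X and p_{Y,ε}(x) = ∫_{B_ε(x)} p_Y. Then vol(B_ε)^{-(a+b)} ∫ p_{X,ε}(x)^a p_{Y,ε}(x)^b p_X(x) dx → ∫ p_X(x)^{a+1} p_Y(x)^b dx as ε → 0. -/
/-!
Dividing by `vol(B_ε)^(a+b)` turns the integrand into `(A_ε p_X)^a (A_ε p_Y)^b p_X`, where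
`A_ε p (x)` is the average of `p` over `B_ε(x)`; by Lebesgue's differentiation theorem it converges
a.e. to `p_X^(a+1) p_Y^b`. With `q = a + b + 1` it is dominated by
`(A_ε p_X)^q + (A_ε p_Y)^q + p_X^q`, a family that converges a.e. and whose integrals never exceed
the integral of its limit, because averaging over balls does not increase `L^q` norms (Jensen's
inequality on each ball, then Fubini). Pratt's version of dominated convergence concludes.
-/

open MeasureTheory Metric Filter Topology

section Pratt

variable {α ι : Type*} [MeasurableSpace α] {μ : Measure α} {l : Filter ι}
  [l.IsCountablyGenerated] [l.NeBot]

/-- Pratt's lemma: dominated convergence with a moving dominating family. -/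
theorem tendsto_lintegral_of_le_of_lintegral_le_limit {f g : ι → α → ENNReal}
    {F G : α → ENNReal} (hf : ∀ i, AEMeasurable (f i) μ) (hg : ∀ i, AEMeasurable (g i) μ)
    (hfg : ∀ i, f i ≤ᵐ[μ] g i) (hf_lim : ∀ᵐ x ∂μ, Tendsto (f · x) l (𝓝 (F x)))
    (hg_lim : ∀ᵐ x ∂μ, Tendsto (g · x) l (𝓝 (G x))) (hG : ∫⁻ x, G x ∂μ ≠ ⊤)
    (hg_le : ∀ i, ∫⁻ x, g i x ∂μ ≤ ∫⁻ x, G x ∂μ) :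
    Tendsto (fun i => ∫⁻ x, f i x ∂μ) l (𝓝 (∫⁻ x, F x ∂μ)) := by
  set c := ∫⁻ x, G x ∂μ
  have hf_le : ∀ i, ∫⁻ x, f i x ∂μ ≤ c := fun i => (lintegral_mono_ae (hfg i)).trans (hg_le i)
  have hsub_limit : c - ∫⁻ x, F x ∂μ ≤ ∫⁻ x, G x - F x ∂μ := by
    rw [tsub_le_iff_left,
      ← lintegral_add_left' (aemeasurable_of_tendsto_metrizable_ae l hf hf_lim)]
    exact lintegral_mono fun x => le_add_tsub
  have hsub_le : ∀ i, ∫⁻ x, g i x - f i x ∂μ ≤ c - ∫⁻ x, f i x ∂μ := fun i =>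
    ENNReal.le_sub_of_add_le_left (ne_top_of_le_ne_top hG (hf_le i)) <|
      (le_lintegral_add _ _).trans <| (lintegral_mono_ae ((hfg i).mono fun x hx =>
        (add_tsub_cancel_of_le hx).le)).trans (hg_le i)
  have hsub_lim : ∀ᵐ x ∂μ, liminf (fun i => g i x - f i x) l = G x - F x := by
    filter_upwards [hf_lim, hg_lim,
      ae_lt_top' (aemeasurable_of_tendsto_metrizable_ae l hg hg_lim) hG] with x hfx hgx hGx
    exact (ENNReal.Tendsto.sub hgx hfx (Or.inl hGx.ne)).liminf_eq
  have hlimsup : c - ∫⁻ x, F x ∂μ ≤ c - limsup (fun i => ∫⁻ x, f i x ∂μ) l :=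
    calc c - ∫⁻ x, F x ∂μ ≤ ∫⁻ x, G x - F x ∂μ := hsub_limit
      _ = ∫⁻ x, liminf (fun i => g i x - f i x) l ∂μ := (lintegral_congr_ae hsub_lim).symm
      _ ≤ liminf (fun i => ∫⁻ x, g i x - f i x ∂μ) l :=
          lintegral_liminf_le' fun i => (hg i).sub (hf i)
      _ ≤ liminf (fun i => c - ∫⁻ x, f i x ∂μ) l := liminf_le_liminf (.of_forall hsub_le)
      _ = c - limsup (fun i => ∫⁻ x, f i x ∂μ) l := ENNReal.liminf_const_sub _ _ hG
  refine tendsto_of_le_liminf_of_limsup_le ?_ ?_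
  · calc ∫⁻ x, F x ∂μ = ∫⁻ x, liminf (fun i => f i x) l ∂μ :=
          lintegral_congr_ae (hf_lim.mono fun x hx => hx.liminf_eq.symm)
      _ ≤ liminf (fun i => ∫⁻ x, f i x ∂μ) l := lintegral_liminf_le' hf
  · exact (ENNReal.sub_le_sub_iff_left (limsup_le_of_le (h := .of_forall hf_le)) hG).1 hlimsup

end Pratt

theorem rpow_mul_rpow_mul_le_sum_rpow {u v w a b : ℝ} (hu : 0 ≤ u) (hv : 0 ≤ v) (hw : 0 ≤ w)
    (ha : 0 ≤ a) (hb : 0 ≤ b) :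
    u ^ a * v ^ b * w ≤ u ^ (a + b + 1) + v ^ (a + b + 1) + w ^ (a + b + 1) := by
  set m := max u (max v w) with hm
  have hm0 : 0 ≤ m := hu.trans (le_max_left _ _)
  calc u ^ a * v ^ b * w ≤ m ^ a * m ^ b * m := by
        gcongr
        · exact le_max_left _ _
        · exact (le_max_left v w).trans (le_max_right _ _)
        · exact (le_max_right v w).trans (le_max_right _ _)
    _ = m ^ (a + b + 1) := by
        rw [Real.rpow_add_of_nonneg hm0 (add_nonneg ha hb) zero_le_one,
          Real.rpow_add_of_nonneg hm0 ha hb, Real.rpow_one]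
    _ ≤ u ^ (a + b + 1) + v ^ (a + b + 1) + w ^ (a + b + 1) := by
        have := Real.rpow_nonneg hu (a + b + 1)
        have := Real.rpow_nonneg hv (a + b + 1)
        have := Real.rpow_nonneg hw (a + b + 1)
        rcases max_choice u (max v w) with h | h
        · rw [hm, h]; linarith
        · rcases max_choice v w with h' | h' <;> rw [hm, h, h'] <;> linarith

theorem ofReal_rpow_mul_rpow_mul_le_sum_rpow {u v w a b : ℝ} (hu : 0 ≤ u) (hv : 0 ≤ v)
    (hw : 0 ≤ w) (ha : 0 ≤ a) (hb : 0 ≤ b) :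
    ENNReal.ofReal (u ^ a * v ^ b * w) ≤ ENNReal.ofReal (u ^ (a + b + 1)) +
      ENNReal.ofReal (v ^ (a + b + 1)) + ENNReal.ofReal (w ^ (a + b + 1)) := by
  rw [← ENNReal.ofReal_add (by positivity) (by positivity),
    ← ENNReal.ofReal_add (by positivity) (by positivity)]
  exact ENNReal.ofReal_le_ofReal (rpow_mul_rpow_mul_le_sum_rpow hu hv hw ha hb)

section BallAverage

variable {E : Type*} [NormedAddCommGroup E] [MeasurableSpace E] [BorelSpace E] {μ : Measure E}
  [μ.IsAddHaarMeasure]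

theorem setAverage_ball_rpow {f : E → ℝ} (hf0 : ∀ x, 0 ≤ f x) (x : E) (ε a : ℝ) :
    (⨍ y in ball x ε, f y ∂μ) ^ a =
      μ.real (ball 0 ε) ^ (-a) * (∫ y in ball x ε, f y ∂μ) ^ a := by
  rw [setAverage_eq, Measure.addHaar_real_ball_center, smul_eq_mul,
    Real.mul_rpow (inv_nonneg.2 measureReal_nonneg)
      (setIntegral_nonneg measurableSet_ball fun y _ => hf0 y),
    Real.inv_rpow measureReal_nonneg, Real.rpow_neg measureReal_nonneg]

variable [NormedSpace ℝ E] [FiniteDimensional ℝ E]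

theorem measurable_indicator_ball {β : Type*} [Zero β] [MeasurableSpace β] {f : E → β}
    (hf : Measurable f) (ε : ℝ) :
    Measurable fun p : E × E => (ball p.1 ε).indicator f p.2 :=
  (hf.comp measurable_snd).indicator
    (measurableSet_lt (measurable_snd.dist measurable_fst) measurable_const)

theorem measurable_setAverage_ball {f : E → ℝ} (hf : Measurable f) (ε : ℝ) :
    Measurable fun x => ⨍ y in ball x ε, f y ∂μ := by
  simp_rw [setAverage_eq, Measure.addHaar_real_ball_center μ _ ε,
    ← integral_indicator measurableSet_ball]
  exact ((measurable_indicator_ball hf ε).stronglyMeasurable.integral_prod_right').measurable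
    |>.const_mul _

theorem lintegral_setLIntegral_ball {g : E → ENNReal} (hg : Measurable g) (ε : ℝ) :
    ∫⁻ x, ∫⁻ y in ball x ε, g y ∂μ ∂μ = μ (ball 0 ε) * ∫⁻ y, g y ∂μ := by
  simp_rw [← lintegral_indicator measurableSet_ball]
  rw [lintegral_lintegral_swap (measurable_indicator_ball hg ε).aemeasurable,
    ← lintegral_const_mul' _ _ measure_ball_lt_top.ne]
  refine lintegral_congr fun y => ?_
  have hswap : ∀ x, (ball x ε).indicator g y = (ball y ε).indicator (fun _ => g y) x := by
    intro x
    by_cases h : y ∈ ball x ε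
    · rw [Set.indicator_of_mem h, Set.indicator_of_mem (mem_ball_comm.1 h)]
    · rw [Set.indicator_of_notMem h, Set.indicator_of_notMem (mt mem_ball_comm.1 h)]
  simp_rw [hswap, lintegral_indicator_const measurableSet_ball, Measure.addHaar_ball_center μ y,
    mul_comm]

theorem lintegral_ofReal_setAverage_ball_rpow_le {f : E → ℝ} (hf : Measurable f)
    (hf0 : ∀ x, 0 ≤ f x) (hf_loc : LocallyIntegrable f μ) {q : ℝ} (hq : 1 ≤ q)
    (hfq : Integrable (fun x => f x ^ q) μ) (ε : ℝ) :
    ∫⁻ x, ENNReal.ofReal ((⨍ y in ball x ε, f y ∂μ) ^ q) ∂μ ≤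
      ∫⁻ x, ENNReal.ofReal (f x ^ q) ∂μ := by
  rcases le_or_gt ε 0 with hε | hε
  · simp [ball_eq_empty.2 hε, Real.zero_rpow (by linarith : q ≠ 0)]
  have hB : μ (ball (0 : E) ε) ≠ 0 := (measure_ball_pos μ 0 hε).ne'
  calc ∫⁻ x, ENNReal.ofReal ((⨍ y in ball x ε, f y ∂μ) ^ q) ∂μ
      ≤ ∫⁻ x, ENNReal.ofReal (⨍ y in ball x ε, f y ^ q ∂μ) ∂μ := by
        refine lintegral_mono fun x => ENNReal.ofReal_le_ofReal ?_
        exact (convexOn_rpow hq).map_set_average_le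
          (Real.continuous_rpow_const (by linarith)).continuousOn isClosed_Ici
          (measure_ball_pos μ x hε).ne' measure_ball_lt_top.ne (ae_of_all _ hf0)
          ((hf_loc.integrableOn_isCompact (isCompact_closedBall x ε)).mono_set
            ball_subset_closedBall) hfq.integrableOn
    _ = ∫⁻ x, (∫⁻ y in ball x ε, ENNReal.ofReal (f y ^ q) ∂μ) * (μ (ball 0 ε))⁻¹ ∂μ := by
        refine lintegral_congr fun x => ?_
        rw [ofReal_setAverage hfq.integrableOn (ae_of_all _ fun y => Real.rpow_nonneg (hf0 y) q),
          Measure.addHaar_ball_center, div_eq_mul_inv]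
    _ = ∫⁻ x, ENNReal.ofReal (f x ^ q) ∂μ := by
        rw [lintegral_mul_const' _ _ (ENNReal.inv_ne_top.2 hB),
          lintegral_setLIntegral_ball (hf.pow_const q).ennreal_ofReal, mul_comm, ← mul_assoc,
          ENNReal.inv_mul_cancel hB measure_ball_lt_top.ne, one_mul]

theorem ae_tendsto_setAverage_ball {f : E → ℝ} (hf : LocallyIntegrable f μ) :
    ∀ᵐ x ∂μ, Tendsto (fun ε => ⨍ y in ball x ε, f y ∂μ) (𝓝[>] 0) (𝓝 (f x)) := by
  filter_upwards [IsUnifLocDoublingMeasure.ae_tendsto_average μ hf 1] with x hx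
  have hpos : ∀ᶠ ε in 𝓝[>] (0 : ℝ), 0 < ε := self_mem_nhdsWithin
  refine (hx (fun _ => x) id tendsto_id (hpos.mono fun ε hε => ?_)).congr'
    (hpos.mono fun ε hε => ?_)
  · simpa using hε.le
  · have hball : ball x ε =ᵐ[μ] closedBall x ε :=
      ae_eq_of_subset_of_measure_ge ball_subset_closedBall
        (by rw [Measure.addHaar_closedBall μ x hε.le, Measure.addHaar_ball_of_pos μ x hε])
        measurableSet_ball.nullMeasurableSet measure_closedBall_lt_top.ne
    simp only [id, Measure.restrict_congr_set hball]

theorem integral_setAverage_ball_rpow_mul_rpow_mul {f g w : E → ℝ} (hf0 : ∀ x, 0 ≤ f x)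
    (hg0 : ∀ x, 0 ≤ g x) {ε : ℝ} (hε : 0 < ε) (a b : ℝ) :
    ∫ x, (⨍ y in ball x ε, f y ∂μ) ^ a * (⨍ y in ball x ε, g y ∂μ) ^ b * w x ∂μ =
      μ.real (ball 0 ε) ^ (-(a + b)) *
        ∫ x, (∫ y in ball x ε, f y ∂μ) ^ a * (∫ y in ball x ε, g y ∂μ) ^ b * w x ∂μ := by
  have hB : 0 < μ.real (ball (0 : E) ε) :=
    ENNReal.toReal_pos (measure_ball_pos μ 0 hε).ne' measure_ball_lt_top.ne
  simp_rw [setAverage_ball_rpow hf0, setAverage_ball_rpow hg0, neg_add, Real.rpow_add hB,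
    ← integral_const_mul]
  congr 1 with x
  ring

theorem tendsto_lintegral_ofReal_setAverage_ball_rpow_mul_rpow_mul {f g w : E → ℝ} {a b : ℝ}
    (ha : 0 ≤ a) (hb : 0 ≤ b) (hf : Measurable f) (hg : Measurable g) (hw : Measurable w)
    (hf0 : ∀ x, 0 ≤ f x) (hg0 : ∀ x, 0 ≤ g x) (hw0 : ∀ x, 0 ≤ w x)
    (hf_loc : LocallyIntegrable f μ) (hg_loc : LocallyIntegrable g μ)
    (hfq : Integrable (fun x => f x ^ (a + b + 1)) μ)
    (hgq : Integrable (fun x => g x ^ (a + b + 1)) μ)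
    (hwq : Integrable (fun x => w x ^ (a + b + 1)) μ) :
    Tendsto (fun ε => ∫⁻ x, ENNReal.ofReal
        ((⨍ y in ball x ε, f y ∂μ) ^ a * (⨍ y in ball x ε, g y ∂μ) ^ b * w x) ∂μ)
      (𝓝[>] 0) (𝓝 (∫⁻ x, ENNReal.ofReal (f x ^ a * g x ^ b * w x) ∂μ)) := by
  set q := a + b + 1
  have hq : 1 ≤ q := by linarith
  set F : ℝ → E → ℝ := fun ε x => ⨍ y in ball x ε, f y ∂μ
  set G : ℝ → E → ℝ := fun ε x => ⨍ y in ball x ε, g y ∂μ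
  have hF : ∀ ε, Measurable (F ε) := measurable_setAverage_ball hf
  have hG : ∀ ε, Measurable (G ε) := measurable_setAverage_ball hg
  have hF_lim : ∀ᵐ x ∂μ, Tendsto (F · x) (𝓝[>] 0) (𝓝 (f x)) := ae_tendsto_setAverage_ball hf_loc
  have hG_lim : ∀ᵐ x ∂μ, Tendsto (G · x) (𝓝[>] 0) (𝓝 (g x)) := ae_tendsto_setAverage_ball hg_loc
  have hsplit : ∀ u v : E → ℝ, Measurable u → Measurable v →
      ∫⁻ x, ENNReal.ofReal (u x ^ q) + ENNReal.ofReal (v x ^ q) + ENNReal.ofReal (w x ^ q) ∂μ =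
        ∫⁻ x, ENNReal.ofReal (u x ^ q) ∂μ + ∫⁻ x, ENNReal.ofReal (v x ^ q) ∂μ +
          ∫⁻ x, ENNReal.ofReal (w x ^ q) ∂μ := fun u v hu hv => by
    rw [lintegral_add_left' (by fun_prop), lintegral_add_left' (by fun_prop)]
  refine tendsto_lintegral_of_le_of_lintegral_le_limit
    (f := fun ε x => ENNReal.ofReal (F ε x ^ a * G ε x ^ b * w x))
    (g := fun ε x => ENNReal.ofReal (F ε x ^ q) + ENNReal.ofReal (G ε x ^ q) +
      ENNReal.ofReal (w x ^ q))
    (G := fun x => ENNReal.ofReal (f x ^ q) + ENNReal.ofReal (g x ^ q) + ENNReal.ofReal (w x ^ q))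
    (fun ε => by have := hF ε; have := hG ε; fun_prop)
    (fun ε => by have := hF ε; have := hG ε; fun_prop)
    (fun ε => ae_of_all _ fun x => ofReal_rpow_mul_rpow_mul_le_sum_rpow
      (integral_nonneg fun y => hf0 y) (integral_nonneg fun y => hg0 y) (hw0 x) ha hb)
    ?_ ?_ ?_ fun ε => ?_
  · filter_upwards [hF_lim, hG_lim] with x hfx hgx
    exact ENNReal.tendsto_ofReal
      (((hfx.rpow_const (.inr ha)).mul (hgx.rpow_const (.inr hb))).mul_const _)
  · filter_upwards [hF_lim, hG_lim] with x hfx hgx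
    exact ((ENNReal.tendsto_ofReal (hfx.rpow_const (.inr (by linarith)))).add
      (ENNReal.tendsto_ofReal (hgx.rpow_const (.inr (by linarith))))).add tendsto_const_nhds
  · rw [hsplit f g hf hg]
    exact ENNReal.add_ne_top.2 ⟨ENNReal.add_ne_top.2 ⟨hfq.lintegral_lt_top.ne,
      hgq.lintegral_lt_top.ne⟩, hwq.lintegral_lt_top.ne⟩
  · rw [hsplit _ _ (hF ε) (hG ε), hsplit f g hf hg]
    exact add_le_add (add_le_add
      (lintegral_ofReal_setAverage_ball_rpow_le hf hf0 hf_loc hq hfq ε)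
      (lintegral_ofReal_setAverage_ball_rpow_le hg hg0 hg_loc hq hgq ε)) le_rfl

theorem tendsto_integral_setAverage_ball_rpow_mul_rpow_mul {f g w : E → ℝ} {a b : ℝ}
    (ha : 0 ≤ a) (hb : 0 ≤ b) (hf : Measurable f) (hg : Measurable g) (hw : Measurable w)
    (hf0 : ∀ x, 0 ≤ f x) (hg0 : ∀ x, 0 ≤ g x) (hw0 : ∀ x, 0 ≤ w x)
    (hf_loc : LocallyIntegrable f μ) (hg_loc : LocallyIntegrable g μ)
    (hfq : Integrable (fun x => f x ^ (a + b + 1)) μ)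
    (hgq : Integrable (fun x => g x ^ (a + b + 1)) μ)
    (hwq : Integrable (fun x => w x ^ (a + b + 1)) μ) :
    Tendsto (fun ε => ∫ x, (⨍ y in ball x ε, f y ∂μ) ^ a * (⨍ y in ball x ε, g y ∂μ) ^ b * w x ∂μ)
      (𝓝[>] 0) (𝓝 (∫ x, f x ^ a * g x ^ b * w x ∂μ)) := by
  have htoReal : ∀ u v : E → ℝ, Measurable u → Measurable v → (∀ x, 0 ≤ u x) →
      (∀ x, 0 ≤ v x) → ∫ x, u x ^ a * v x ^ b * w x ∂μ =
        (∫⁻ x, ENNReal.ofReal (u x ^ a * v x ^ b * w x) ∂μ).toReal :=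
    fun u v hu hv hu0 hv0 => integral_eq_lintegral_of_nonneg_ae
      (ae_of_all _ fun x => by have := hu0 x; have := hv0 x; have := hw0 x; positivity)
      (by fun_prop)
  have hlimit_int : Integrable (fun x => f x ^ a * g x ^ b * w x) μ :=
    ((hfq.add hgq).add hwq).mono' (by fun_prop) (ae_of_all _ fun x => by
      rw [Real.norm_of_nonneg (by have := hf0 x; have := hg0 x; have := hw0 x; positivity)]
      exact rpow_mul_rpow_mul_le_sum_rpow (hf0 x) (hg0 x) (hw0 x) ha hb)
  rw [htoReal f g hf hg hf0 hg0]
  refine ((ENNReal.tendsto_toReal hlimit_int.lintegral_lt_top.ne).comp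
    (tendsto_lintegral_ofReal_setAverage_ball_rpow_mul_rpow_mul ha hb hf hg hw hf0 hg0 hw0
      hf_loc hg_loc hfq hgq hwq)).congr fun ε => ?_
  exact (htoReal _ _ (measurable_setAverage_ball hf ε) (measurable_setAverage_ball hg ε)
    (fun x => integral_nonneg fun y => hf0 y) (fun x => integral_nonneg fun y => hg0 y)).symm

end BallAverage

theorem stmt6_general (d : ℕ) (a b : ℝ) (ha : 0 ≤ a) (hb : 0 ≤ b)
    (pX pY : EuclideanSpace ℝ (Fin d) → ℝ)
    (hXm : Measurable pX) (hYm : Measurable pY)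
    (hXnn : ∀ x, 0 ≤ pX x) (hYnn : ∀ x, 0 ≤ pY x)
    (hXint : Integrable pX) (hYint : Integrable pY)
    (hXq : Integrable (fun x => pX x ^ (a + b + 1)))
    (hYq : Integrable (fun x => pY x ^ (a + b + 1))) :
    Tendsto (fun ε : ℝ =>
        ((volume (ball (0 : EuclideanSpace ℝ (Fin d)) ε)).toReal) ^ (-(a + b)) *
          ∫ x, (∫ y in ball x ε, pX y) ^ a * (∫ y in ball x ε, pY y) ^ b * pX x)
      (𝓝[>] 0) (𝓝 (∫ x, pX x ^ (a + 1) * pY x ^ b)) := by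
  have hlimit : ∫ x, pX x ^ (a + 1) * pY x ^ b = ∫ x, pX x ^ a * pY x ^ b * pX x := by
    congr 1 with x
    rw [Real.rpow_add_one' (hXnn x) (by linarith)]
    ring
  rw [hlimit]
  refine (tendsto_integral_setAverage_ball_rpow_mul_rpow_mul ha hb hXm hYm hXm hXnn hYnn hXnn
    hXint.locallyIntegrable hYint.locallyIntegrable hXq hYq hXq).congr' ?_
  filter_upwards [self_mem_nhdsWithin] with ε hε
  exact integral_setAverage_ball_rpow_mul_rpow_mul hXnn hYnn hε a b

/-- Lemma 1 of the paper, convergence of the normalized functional. -/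
theorem stmt6 (d : ℕ) (hd : 1 ≤ d) (a b : ℝ) (ha : 0 ≤ a) (hb : 0 ≤ b)
    (pX pY : EuclideanSpace ℝ (Fin d) → ℝ)
    (hXm : Measurable pX) (hYm : Measurable pY)
    (hXnn : ∀ x, 0 ≤ pX x) (hYnn : ∀ x, 0 ≤ pY x)
    (hXint : Integrable pX) (hYint : Integrable pY)
    (hX1 : ∫ x, pX x = 1) (hY1 : ∫ x, pY x = 1)
    (hXq : Integrable (fun x => pX x ^ (a + b + 1)))
    (hYq : Integrable (fun x => pY x ^ (a + b + 1))) :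
    Tendsto (fun ε : ℝ =>
        ((volume (ball (0 : EuclideanSpace ℝ (Fin d)) ε)).toReal) ^ (-(a + b)) *
          ∫ x, (∫ y in ball x ε, pX y) ^ a * (∫ y in ball x ε, pY y) ^ b * pX x)
      (𝓝[>] 0) (𝓝 (∫ x, pX x ^ (a + 1) * pY x ^ b)) :=
  stmt6_general d a b ha hb pX pY hXm hYm hXnn hYnn hXint hYint hXq hYq
end

section
/- Bias bound for the quadratic functional q_{1,1}: if p_X, p_Y ∈ H_2^{(α)}(K), i.e., ‖p(·+h) − p(·)‖_{L^2} ≤ K|h|^α for all |h| ≤ 1, then |E[p_X(Y − εV)] − ∫ p_X p_Y| ≤ (1/2) K² ε^{2α} for 0 < ε ≤ 1, where V is uniform on the unit ball of ℝ^d and Y has density p_Y. -/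
/-!
With the cross-correlation `T v = ∫ p_X (y + v) p_Y y dy`, Fubini turns the left-hand side into
the average of `T v - T 0` over the ball `B_ε(0)`. The ball is symmetric, so this is half the
average of the second difference `T v + T (-v) - 2 T 0 = -∫ Δ_v p_X · Δ_v p_Y`, which
Cauchy–Schwarz and the Hölder condition bound by `K² ‖v‖^{2α} ≤ K² ε^{2α}`.
-/

open MeasureTheory Metric Filter

section CauchySchwarz

variable {α : Type*} [MeasurableSpace α] {μ : Measure α} {f g : α → ℝ}

lemma integral_norm_mul_le_eLpNorm_two_mul (hf : MemLp f 2 μ) (hg : MemLp g 2 μ) :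
    ∫ x, ‖f x * g x‖ ∂μ ≤ (eLpNorm f 2 μ).toReal * (eLpNorm g 2 μ).toReal := by
  rw [integral_norm_eq_lintegral_enorm (f := fun x => f x * g x) (hf.1.mul hg.1),
    ← eLpNorm_one_eq_lintegral_enorm, ← ENNReal.toReal_mul]
  refine ENNReal.toReal_mono (by finiteness [hf.2, hg.2]) ?_
  simpa using eLpNorm_le_eLpNorm_mul_eLpNorm'_of_norm (p := 2) (q := 2) (r := 1) hf.1 hg.1
    (· * ·) 1 (.of_forall fun x => by simp [norm_mul])

lemma abs_integral_mul_le_eLpNorm_two_mul (hf : MemLp f 2 μ) (hg : MemLp g 2 μ) :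
    |∫ x, f x * g x ∂μ| ≤ (eLpNorm f 2 μ).toReal * (eLpNorm g 2 μ).toReal :=
  (norm_integral_le_integral_norm _).trans (integral_norm_mul_le_eLpNorm_two_mul hf hg)

end CauchySchwarz

lemma abs_setAverage_sub_le_of_abs_add_neg_sub_le {G : Type*} [AddGroup G] [MeasurableSpace G]
    [MeasurableNeg G] {μ : Measure G} [μ.IsNegInvariant] {s : Set G} (hs_neg : -s = s)
    (hμs0 : μ s ≠ 0) (hμs : μ s ≠ ⊤) {F : G → ℝ} (hF : IntegrableOn F s μ) {C : ℝ}
    (hC : ∀ v ∈ s, |F v + F (-v) - 2 * F 0| ≤ C) :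
    |⨍ v in s, F v ∂μ - F 0| ≤ C / 2 := by
  have hm : 0 < μ.real s := ENNReal.toReal_pos hμs0 hμs
  have hneg_mp : MeasurePreserving Neg.neg (μ.restrict s) (μ.restrict s) := by
    simpa only [Set.neg_preimage, hs_neg] using
      (Measure.measurePreserving_neg μ).restrict_preimage_emb
        (MeasurableEquiv.neg G).measurableEmbedding s
  have hF_neg : IntegrableOn (fun v => F (-v)) s μ :=
    (hneg_mp.integrable_comp_emb (MeasurableEquiv.neg G).measurableEmbedding).mpr hF
  have h_neg : ∫ v in s, F (-v) ∂μ = ∫ v in s, F v ∂μ :=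
    hneg_mp.integral_comp (MeasurableEquiv.neg G).measurableEmbedding F
  have h_sum : ∫ v in s, (F v + F (-v) - 2 * F 0) ∂μ
      = 2 * (∫ v in s, F v ∂μ - μ.real s * F 0) := by
    rw [integral_sub, integral_add hF hF_neg, h_neg, setIntegral_const, smul_eq_mul]
    · ring
    exacts [hF.add hF_neg, integrableOn_const hμs]
  have h_bound : |∫ v in s, (F v + F (-v) - 2 * F 0) ∂μ| ≤ C * μ.real s :=
    norm_setIntegral_le_of_norm_le_const (f := fun v => F v + F (-v) - 2 * F 0) hμs.lt_top hC
  have h_avg : ⨍ v in s, F v ∂μ - F 0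
      = (μ.real s)⁻¹ / 2 * ∫ v in s, (F v + F (-v) - 2 * F 0) ∂μ := by
    rw [setAverage_eq, smul_eq_mul, h_sum]
    field_simp
  rw [h_avg, abs_mul, abs_of_pos (by positivity)]
  calc (μ.real s)⁻¹ / 2 * |∫ v in s, (F v + F (-v) - 2 * F 0) ∂μ|
      ≤ (μ.real s)⁻¹ / 2 * (C * μ.real s) := by gcongr
    _ = C / 2 := by field_simp

lemma MeasureTheory.MemLp.comp_add_right {G : Type*} [Add G] [MeasurableSpace G] [MeasurableAdd G]
    {μ : Measure G} [μ.IsAddRightInvariant] {f : G → ℝ} {p : ENNReal} (hf : MemLp f p μ) (v : G) :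
    MemLp (fun y => f (y + v)) p μ :=
  hf.comp_measurePreserving (measurePreserving_add_right μ v)

section CrossCorrelation

variable {G : Type*} [AddCommGroup G] [MeasurableSpace G] {f g : G → ℝ}

noncomputable def crossCorrelation (μ : Measure G) (f g : G → ℝ) (v : G) : ℝ :=
  ∫ y, f (y + v) * g y ∂μ

lemma crossCorrelation_zero (μ : Measure G) :
    crossCorrelation μ f g 0 = ∫ y, f y * g y ∂μ := by
  simp [crossCorrelation]

variable [MeasurableAdd G] {μ : Measure G} [μ.IsAddRightInvariant]

lemma crossCorrelation_add_crossCorrelation_neg_sub (hf : MemLp f 2 μ) (hg : MemLp g 2 μ) (v : G) :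
    crossCorrelation μ f g v + crossCorrelation μ f g (-v) - 2 * crossCorrelation μ f g 0
      = -∫ y, (f (y + v) - f y) * (g (y + v) - g y) ∂μ := by
  have hfv := hf.comp_add_right v
  have hgv := hg.comp_add_right v
  have i1 : Integrable (fun y => f (y + v) * g (y + v)) μ := hfv.integrable_mul hgv
  have i2 : Integrable (fun y => f (y + v) * g y) μ := hfv.integrable_mul hg
  have i3 : Integrable (fun y => f y * g (y + v)) μ := hf.integrable_mul hgv
  have i4 : Integrable (fun y => f y * g y) μ := hf.integrable_mul hg
  have h_neg : crossCorrelation μ f g (-v) = ∫ y, f y * g (y + v) ∂μ := by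
    simpa [crossCorrelation] using
      (integral_add_right_eq_self (μ := μ) (fun y => f (y + -v) * g y) v).symm
  have h_diag : ∫ y, f (y + v) * g (y + v) ∂μ = crossCorrelation μ f g 0 := by
    rw [crossCorrelation_zero]
    exact integral_add_right_eq_self (fun y => f y * g y) v
  have h_expand : ∀ y, (f (y + v) - f y) * (g (y + v) - g y)
      = (f (y + v) * g (y + v) - f (y + v) * g y) - (f y * g (y + v) - f y * g y) :=
    fun y => by ring
  simp_rw [h_expand]
  rw [integral_sub, integral_sub i1 i2, integral_sub i3 i4, h_diag, ← h_neg]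
  · simp only [crossCorrelation, add_zero]
    ring
  exacts [i1.sub i2, i3.sub i4]

lemma abs_crossCorrelation_second_difference_le (hf : MemLp f 2 μ) (hg : MemLp g 2 μ) (v : G) :
    |crossCorrelation μ f g v + crossCorrelation μ f g (-v) - 2 * crossCorrelation μ f g 0|
      ≤ (eLpNorm (fun y => f (y + v) - f y) 2 μ).toReal
        * (eLpNorm (fun y => g (y + v) - g y) 2 μ).toReal := by
  rw [crossCorrelation_add_crossCorrelation_neg_sub hf hg, abs_neg]
  exact abs_integral_mul_le_eLpNorm_two_mul ((hf.comp_add_right v).sub hf)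
    ((hg.comp_add_right v).sub hg)

lemma integral_norm_translate_mul_le (hf : MemLp f 2 μ) (hg : MemLp g 2 μ) (v : G) :
    ∫ y, ‖f (y + v) * g y‖ ∂μ ≤ (eLpNorm f 2 μ).toReal * (eLpNorm g 2 μ).toReal := by
  have h_transl : eLpNorm (fun y => f (y + v)) 2 μ = eLpNorm f 2 μ :=
    eLpNorm_comp_measurePreserving hf.1 (measurePreserving_add_right μ v)
  simpa only [h_transl] using integral_norm_mul_le_eLpNorm_two_mul (hf.comp_add_right v) hg

end CrossCorrelation

section Fubini

variable {G : Type*} [AddCommGroup G] [MeasurableSpace G] [MeasurableAdd₂ G]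
  {μ : Measure G} [SFinite μ] [μ.IsAddLeftInvariant] [μ.IsAddRightInvariant] {f g : G → ℝ}

lemma integrable_translate_mul_prod_restrict (hf : MemLp f 2 μ) (hg : MemLp g 2 μ) {s : Set G}
    (hs : μ s ≠ ⊤) :
    Integrable (fun p : G × G => f (p.1 + p.2) * g p.1) (μ.prod (μ.restrict s)) := by
  have h_meas : AEStronglyMeasurable (fun p : G × G => f (p.1 + p.2) * g p.1)
      (μ.prod (μ.restrict s)) := by
    have hf_add := hf.1.comp_quasiMeasurePreserving
      (quasiMeasurePreserving_add_swap μ (μ.restrict s))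
    simp only [Function.comp_def, add_comm _ (Prod.fst _)] at hf_add
    exact hf_add.mul hg.1.comp_fst
  -- The `y`-integrals are bounded uniformly in `v` by Cauchy–Schwarz, and `s` has finite measure.
  rw [integrable_prod_iff' h_meas]
  refine ⟨.of_forall fun v => (hf.comp_add_right v).integrable_mul hg, ?_⟩
  have : IsFiniteMeasure (μ.restrict s) := isFiniteMeasure_restrict.mpr hs
  refine Integrable.mono' (integrable_const ((eLpNorm f 2 μ).toReal * (eLpNorm g 2 μ).toReal))
    h_meas.prod_swap.norm.integral_prod_right' (.of_forall fun v => ?_)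
  rw [Real.norm_of_nonneg (integral_nonneg fun _ => norm_nonneg _)]
  exact integral_norm_translate_mul_le hf hg v

lemma integral_setIntegral_translate_mul (hf : MemLp f 2 μ) (hg : MemLp g 2 μ) {s : Set G}
    (hs : μ s ≠ ⊤) :
    ∫ y, (∫ v in s, f (y + v) ∂μ) * g y ∂μ = ∫ v in s, crossCorrelation μ f g v ∂μ := by
  simp_rw [← integral_mul_const]
  exact integral_integral_swap (f := fun y v => f (y + v) * g y)
    (integrable_translate_mul_prod_restrict hf hg hs)

lemma integrableOn_crossCorrelation (hf : MemLp f 2 μ) (hg : MemLp g 2 μ) {s : Set G}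
    (hs : μ s ≠ ⊤) : IntegrableOn (crossCorrelation μ f g) s μ :=
  (integrable_translate_mul_prod_restrict hf hg hs).integral_prod_right

end Fubini

lemma setIntegral_ball_eq_setIntegral_ball_zero {G : Type*} [SeminormedAddCommGroup G]
    [MeasurableSpace G] [MeasurableAdd G] {μ : Measure G} [μ.IsAddLeftInvariant]
    (f : G → ℝ) (y : G) (r : ℝ) :
    ∫ z in ball y r, f z ∂μ = ∫ v in ball 0 r, f (y + v) ∂μ := by
  have h_pre : (y + ·) ⁻¹' ball y r = ball (0 : G) r := by
    ext v
    simp [dist_eq_norm]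
  rw [← (measurePreserving_add_left μ y).setIntegral_preimage_emb
    (MeasurableEquiv.addLeft y).measurableEmbedding f, h_pre]

lemma toReal_eLpNorm_translate_sub_le_of_holder {E : Type*} [SeminormedAddGroup E]
    [MeasurableSpace E] {μ : Measure E} {p : E → ℝ} {q : ENNReal} {K α ε : ℝ} (hK : 0 ≤ K)
    (hα : 0 ≤ α) (hε1 : ε ≤ 1) (hp : ∀ h : E, ‖h‖ ≤ 1 →
      eLpNorm (fun x => p (x + h) - p x) q μ ≤ ENNReal.ofReal (K * ‖h‖ ^ α))
    {v : E} (hv : ‖v‖ ≤ ε) :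
    (eLpNorm (fun x => p (x + v) - p x) q μ).toReal ≤ K * ε ^ α :=
  calc _ ≤ K * ‖v‖ ^ α :=
        ENNReal.toReal_le_of_le_ofReal (by positivity) (hp v (hv.trans hε1))
    _ ≤ K * ε ^ α := by gcongr

theorem stmt9_general (d : ℕ) (K α : ℝ) (hK : 0 < K) (hα0 : 0 < α)
    (pX pY : EuclideanSpace ℝ (Fin d) → ℝ)
    (hXL2 : MemLp pX 2 volume) (hYL2 : MemLp pY 2 volume)
    (hXHol : ∀ h : EuclideanSpace ℝ (Fin d), ‖h‖ ≤ 1 →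
      eLpNorm (fun x => pX (x + h) - pX x) 2 volume ≤ ENNReal.ofReal (K * ‖h‖ ^ α))
    (hYHol : ∀ h : EuclideanSpace ℝ (Fin d), ‖h‖ ≤ 1 →
      eLpNorm (fun x => pY (x + h) - pY x) 2 volume ≤ ENNReal.ofReal (K * ‖h‖ ^ α))
    (ε : ℝ) (hε0 : 0 < ε) (hε1 : ε ≤ 1) :
    |((volume (ball (0 : EuclideanSpace ℝ (Fin d)) ε)).toReal)⁻¹ *
        (∫ y, (∫ z in ball y ε, pX z) * pY y) - ∫ y, pX y * pY y|
      ≤ (1/2) * K^2 * ε ^ (2 * α) := by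
  set B := ball (0 : EuclideanSpace ℝ (Fin d)) ε with hB_def
  have hB : volume B ≠ ⊤ := measure_ball_lt_top.ne
  have h_second_difference : ∀ v ∈ B, |crossCorrelation volume pX pY v
      + crossCorrelation volume pX pY (-v) - 2 * crossCorrelation volume pX pY 0|
        ≤ K ^ 2 * ε ^ (2 * α) := by
    intro v hv
    calc _ ≤ _ := abs_crossCorrelation_second_difference_le hXL2 hYL2 v
      _ ≤ (K * ε ^ α) * (K * ε ^ α) := by
        have hvε : ‖v‖ ≤ ε := (mem_ball_zero_iff.mp hv).le
        gcongr
        exacts [toReal_eLpNorm_translate_sub_le_of_holder hK.le hα0.le hε1 hXHol hvε,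
          toReal_eLpNorm_translate_sub_le_of_holder hK.le hα0.le hε1 hYHol hvε]
      _ = K ^ 2 * ε ^ (2 * α) := by rw [two_mul, Real.rpow_add hε0]; ring
  have h_average : ((volume B).toReal)⁻¹ * ∫ y, (∫ z in ball y ε, pX z) * pY y
      = ⨍ v in B, crossCorrelation volume pX pY v := by
    simp_rw [setIntegral_ball_eq_setIntegral_ball_zero pX, ← hB_def,
      integral_setIntegral_translate_mul hXL2 hYL2 hB, setAverage_eq, smul_eq_mul, measureReal_def]
  rw [h_average, ← crossCorrelation_zero]
  calc _ ≤ K ^ 2 * ε ^ (2 * α) / 2 :=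
        abs_setAverage_sub_le_of_abs_add_neg_sub_le (by simp [neg_ball])
          (measure_ball_pos volume 0 hε0).ne' hB (integrableOn_crossCorrelation hXL2 hYL2 hB)
          h_second_difference
    _ = (1/2) * K^2 * ε ^ (2 * α) := by ring

/-- bias bound for the quadratic functional `q_{1,1}` under
`L²`-Hölder smoothness of the densities. -/
theorem stmt9 (d : ℕ) (hd : 1 ≤ d) (K α : ℝ) (hK : 0 < K) (hα0 : 0 < α) (hα1 : α ≤ 1)
    (pX pY : EuclideanSpace ℝ (Fin d) → ℝ)
    (hXm : Measurable pX) (hYm : Measurable pY)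
    (hXnn : ∀ x, 0 ≤ pX x) (hYnn : ∀ x, 0 ≤ pY x)
    (hXint : Integrable pX) (hYint : Integrable pY)
    (hX1 : ∫ x, pX x = 1) (hY1 : ∫ x, pY x = 1)
    (hXL2 : MemLp pX 2 volume) (hYL2 : MemLp pY 2 volume)
    (hXHol : ∀ h : EuclideanSpace ℝ (Fin d), ‖h‖ ≤ 1 →
      eLpNorm (fun x => pX (x + h) - pX x) 2 volume ≤ ENNReal.ofReal (K * ‖h‖ ^ α))
    (hYHol : ∀ h : EuclideanSpace ℝ (Fin d), ‖h‖ ≤ 1 →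
      eLpNorm (fun x => pY (x + h) - pY x) 2 volume ≤ ENNReal.ofReal (K * ‖h‖ ^ α))
    (ε : ℝ) (hε0 : 0 < ε) (hε1 : ε ≤ 1) :
    |((volume (ball (0 : EuclideanSpace ℝ (Fin d)) ε)).toReal)⁻¹ *
        (∫ y, (∫ z in ball y ε, pX z) * pY y) - ∫ y, pX y * pY y|
      ≤ (1/2) * K^2 * ε ^ (2 * α) :=
  stmt9_general d K α hK hα0 pX pY hXL2 hYL2 hXHol hYHol ε hε0 hε1
end
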